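/- For predicates A, B on natural numbers with the witness comparison relations, if (B ≤ B) or (A ≤ A) holds, then (A ≤ B) or (B < A) holds. -/
import Mathlib


/-- Witness comparison: (A ≤ B) := ∃ x, A x ∧ ∀ y < x, ¬ B y. -/
def WLeq (A B : ℕ → Prop) : Prop := ∃ x, A x ∧ ∀ y < x, ¬ B y

/-- Witness comparison: (A < B) := ∃ x, A x ∧ ∀ y ≤ x, ¬ B y. -/
def WLt (A B : ℕ → Prop) : Prop := ∃ x, A x ∧ ∀ y ≤ x, ¬ B y

theorem wleq_or_wlt (A B : ℕ → Prop) : (WLeq B B ∨ WLeq A A) → (WLeq A B ∨ WLt B A) := by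
  classical
  rintro (⟨b, hb, hbmin⟩ | ⟨a, ha, hamin⟩)
  · by_cases h : ∃ y ≤ b, A y
    · let a := Nat.find h
      have hab := Nat.find_spec h
      exact Or.inl ⟨a, hab.2, fun y hy => hbmin y (lt_of_lt_of_le hy hab.1)⟩
    · push_neg at h
      exact Or.inr ⟨b, hb, fun y hy hA => h y hy hA⟩
  · by_cases h : ∃ y < a, B y
    · let b := Nat.find h
      have hba := Nat.find_spec h
      exact Or.inr ⟨b, hba.2, fun y hy hA => hamin y (lt_of_le_of_lt hy hba.1) hA⟩
    · push_neg at h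
      exact Or.inl ⟨a, ha, fun y hy hB => h y hy hB⟩
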